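/- Let δ ∈ (0,1), σ > 0, and η > 0. Suppose (xₙ) is a sequence of nonnegative reals such that for every n, max_{k³ ≤ j < (k+1)³} xⱼ ≥ η for all large k, and let aₙ = e^{−(1+δ/2)√(2σ²n log log n)}. Then for all sufficiently large n, Σ_{j≥n} aⱼ·xⱼ ≥ η·e^{−(1+δ)²√(2σ²n log log n)}. -/

import Mathlib

/-!
Choose `s = (1 + δ)² / (1 + δ/2) > 1`. For large `n` the cube block `[k³, (k+1)³)` with `k` minimal
subject to `n ≤ k³` lies inside `[n, s n]`, so it contains a `j` with `η ≤ x j`. Since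
`t ↦ t log log t` grows only by a factor `s²` from `n` to `s n`, the weight `a j` is at least
`exp (-(1 + δ/2) s √(2σ² n log log n)) = exp (-(1 + δ)² √(2σ² n log log n))`, and the single term
`a j x j` of the tail sum already exceeds the claimed bound.
-/

open Real Filter Topology

lemma eventually_add_two_pow_three_le {c : ℝ} (hc : 1 < c) :
    ∀ᶠ k : ℕ in atTop, ((k : ℝ) + 2) ^ 3 ≤ c * (k : ℝ) ^ 3 := by
  have hlim : Tendsto (fun k : ℕ => (1 + 2 / (k : ℝ)) ^ 3) atTop (𝓝 1) := by
    simpa using ((tendsto_const_div_atTop_nhds_zero_nat (2 : ℝ)).const_add 1).pow 3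
  filter_upwards [hlim.eventually (gt_mem_nhds hc), eventually_gt_atTop 0] with k hk hk0
  have hk0' : (0 : ℝ) < k := by exact_mod_cast hk0
  calc ((k : ℝ) + 2) ^ 3 = (1 + 2 / (k : ℝ)) ^ 3 * (k : ℝ) ^ 3 := by field_simp
    _ ≤ c * (k : ℝ) ^ 3 := by gcongr

lemma eventually_exists_cube_block {c : ℝ} (hc : 1 < c) (K : ℕ) :
    ∀ᶠ n : ℕ in atTop, ∃ k ≥ K, n ≤ k ^ 3 ∧ ((k : ℝ) + 1) ^ 3 ≤ c * n := by
  obtain ⟨M, hM⟩ := eventually_atTop.1 (eventually_add_two_pow_three_le hc)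
  filter_upwards [eventually_ge_atTop ((max K M + 1) ^ 3)] with n hn
  have hex : ∃ k, n ≤ k ^ 3 := ⟨n, Nat.le_self_pow three_ne_zero n⟩
  set k := Nat.find hex
  have hk : max K M < k := by
    by_contra! h
    have : n ≤ (max K M) ^ 3 := (Nat.find_spec hex).trans (Nat.pow_le_pow_left h 3)
    have : (max K M) ^ 3 < (max K M + 1) ^ 3 := Nat.pow_lt_pow_left (lt_add_one _) three_ne_zero
    omega
  have hmin : (k - 1) ^ 3 < n := not_le.1 (Nat.find_min hex (Nat.sub_one_lt_of_lt hk))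
  refine ⟨k, by omega, Nat.find_spec hex, ?_⟩
  have hk1 : ((k - 1 : ℕ) : ℝ) + 2 = k + 1 := by push_cast [show 1 ≤ k by omega]; ring
  calc ((k : ℝ) + 1) ^ 3 = (((k - 1 : ℕ) : ℝ) + 2) ^ 3 := by rw [hk1]
    _ ≤ c * ((k - 1 : ℕ) : ℝ) ^ 3 := hM _ (by omega)
    _ ≤ c * n := by gcongr; exact_mod_cast hmin.le

lemma eventually_mul_log_log_le {s : ℝ} (hs : 1 < s) :
    ∀ᶠ t : ℝ in atTop, ∀ u, t ≤ u → u ≤ s * t →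
      u * log (log u) ≤ s ^ 2 * (t * log (log t)) := by
  have hLL : Tendsto (fun t => log (log t)) atTop atTop :=
    tendsto_log_atTop.comp tendsto_log_atTop
  filter_upwards [eventually_ge_atTop 3, eventually_ge_atTop s,
    hLL.eventually_ge_atTop (log 2 / (s - 1))] with t ht3 hts htL u htu hut
  have hlogt : 1 ≤ log t := by
    rw [le_log_iff_exp_le (by linarith)]
    linarith [exp_one_lt_d9]
  have hlogu : 1 ≤ log u := hlogt.trans (log_le_log (by linarith) htu)
  have hLLt : 0 ≤ log (log t) := log_nonneg hlogt
  have hlogu_le : log u ≤ 2 * log t := by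
    calc log u ≤ log (t * t) := log_le_log (by linarith) (by nlinarith)
      _ = 2 * log t := by rw [log_mul (by positivity) (by positivity)]; ring
  -- `log log` grows by only an additive `log 2`, which is absorbed once `log log t ≥ log 2 / (s - 1)`.
  have hLLu : log (log u) ≤ s * log (log t) := by
    have : log 2 ≤ (s - 1) * log (log t) := by
      rwa [div_le_iff₀ (by linarith), mul_comm] at htL
    calc log (log u) ≤ log (2 * log t) := log_le_log (by linarith) hlogu_le
      _ = log 2 + log (log t) := log_mul two_ne_zero (by linarith)
      _ ≤ s * log (log t) := by linarith
  calc u * log (log u) ≤ (s * t) * (s * log (log t)) :=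
        mul_le_mul hut hLLu (log_nonneg hlogu) (by positivity)
    _ = s ^ 2 * (t * log (log t)) := by ring

lemma eventually_sqrt_mul_log_log_le {C s : ℝ} (hC : 0 ≤ C) (hs : 1 < s) :
    ∀ᶠ t : ℝ in atTop, ∀ u, t ≤ u → u ≤ s * t →
      √(C * u * log (log u)) ≤ s * √(C * t * log (log t)) := by
  filter_upwards [eventually_mul_log_log_le hs] with t ht u htu hut
  rw [← sqrt_sq (by linarith : 0 ≤ s), ← sqrt_mul (sq_nonneg s)]
  refine sqrt_le_sqrt ?_
  have := mul_le_mul_of_nonneg_left (ht u htu hut) hC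
  linarith

-- No sign condition on `p` is needed: `ENNReal.ofReal` sends negative reals to `0`.
lemma ENNReal.ofReal_mul_le_ofReal_mul {p q p' q' : ℝ} (hp : p ≤ p') (hq : q ≤ q') (hq0 : 0 ≤ q) :
    ENNReal.ofReal (p * q) ≤ ENNReal.ofReal (p' * q') := by
  rw [ENNReal.ofReal_mul' hq0, ENNReal.ofReal_mul' (hq0.trans hq)]
  gcongr

lemma ENNReal.le_tsum_nat_add (f : ℕ → ENNReal) {n j : ℕ} (h : n ≤ j) :
    f j ≤ ∑' i, f (n + i) := by
  simpa [Nat.add_sub_cancel' h] using ENNReal.le_tsum (f := fun i => f (n + i)) (j - n)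

theorem stmt_17_general (δ σ η : ℝ) (hδ : 0 < δ)
    (x : ℕ → ℝ)
    (hmax : ∃ K : ℕ, ∀ k ≥ K, ∃ j : ℕ, k ^ 3 ≤ j ∧ j < (k + 1) ^ 3 ∧ η ≤ x j)
    (a : ℕ → ℝ)
    (ha : ∀ n : ℕ, a n =
      Real.exp (-(1 + δ / 2) * Real.sqrt (2 * σ ^ 2 * n * Real.log (Real.log n)))) :
    ∃ N : ℕ, ∀ n ≥ N,
      ENNReal.ofReal (η * Real.exp (-(1 + δ) ^ 2 * Real.sqrt (2 * σ ^ 2 * n * Real.log (Real.log n))))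
        ≤ ∑' j : ℕ, ENNReal.ofReal (a (n + j) * x (n + j)) := by
  obtain ⟨K, hK⟩ := hmax
  have hδ2 : 0 < 1 + δ / 2 := by linarith
  set s := (1 + δ) ^ 2 / (1 + δ / 2)
  have hs : 1 < s := by rw [lt_div_iff₀ hδ2]; nlinarith
  obtain ⟨N, hN⟩ := eventually_atTop.1 ((eventually_exists_cube_block hs K).and
    (tendsto_natCast_atTop_atTop.eventually
      (eventually_sqrt_mul_log_log_le (by positivity : (0 : ℝ) ≤ 2 * σ ^ 2) hs)))
  refine ⟨N, fun n hn => ?_⟩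
  obtain ⟨⟨k, hkK, hnk, hks⟩, hgrowth⟩ := hN n hn
  obtain ⟨j, hkj, hjk, hηj⟩ := hK k hkK
  have hnj : n ≤ j := hnk.trans hkj
  have hjs : (j : ℝ) ≤ s * n := (by exact_mod_cast hjk.le : (j : ℝ) ≤ ((k : ℝ) + 1) ^ 3).trans hks
  have hexp : (1 + δ / 2) * √(2 * σ ^ 2 * j * log (log j))
      ≤ (1 + δ) ^ 2 * √(2 * σ ^ 2 * n * log (log n)) := calc
    _ ≤ (1 + δ / 2) * (s * √(2 * σ ^ 2 * n * log (log n))) := by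
        gcongr
        exact hgrowth j (by exact_mod_cast hnj) hjs
    _ = (1 + δ) ^ 2 * √(2 * σ ^ 2 * n * log (log n)) := by
        rw [← mul_assoc, mul_div_cancel₀ _ hδ2.ne']
  calc ENNReal.ofReal (η * exp (-(1 + δ) ^ 2 * √(2 * σ ^ 2 * n * log (log n))))
      ≤ ENNReal.ofReal (x j * a j) := by
        refine ENNReal.ofReal_mul_le_ofReal_mul hηj ?_ (exp_pos _).le
        rw [ha j, exp_le_exp]
        linarith
    _ ≤ ∑' i : ℕ, ENNReal.ofReal (a (n + i) * x (n + i)) := by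
        rw [mul_comm]
        exact ENNReal.le_tsum_nat_add (fun i => ENNReal.ofReal (a i * x i)) hnj

theorem stmt_17 (δ σ η : ℝ) (hδ : 0 < δ) (hδ1 : δ < 1) (hσ : 0 < σ) (hη : 0 < η)
    (x : ℕ → ℝ) (hx : ∀ j, 0 ≤ x j)
    (hmax : ∃ K : ℕ, ∀ k ≥ K, ∃ j : ℕ, k ^ 3 ≤ j ∧ j < (k + 1) ^ 3 ∧ η ≤ x j)
    (a : ℕ → ℝ)
    (ha : ∀ n : ℕ, a n =
      Real.exp (-(1 + δ / 2) * Real.sqrt (2 * σ ^ 2 * n * Real.log (Real.log n)))) :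
    ∃ N : ℕ, ∀ n ≥ N,
      ENNReal.ofReal (η * Real.exp (-(1 + δ) ^ 2 * Real.sqrt (2 * σ ^ 2 * n * Real.log (Real.log n))))
        ≤ ∑' j : ℕ, ENNReal.ofReal (a (n + j) * x (n + j)) :=
  stmt_17_general δ σ η hδ x hmax a ha
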